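/- arXiv:1312.7730 — 3 statements merged into one kernel-verified Lean document; each statement's English description precedes it below -/
import Mathlib

section
/- Let X be a normed space, φ, f: X → (-∞,∞] with φ(0)=0, T(x) = inf{φ(y−x)+f(y) : y ∈ X}, and let x̄ satisfy T(x̄) = f(x̄) finite. Then for every ε ≥ 0, ∂̂_ε T(x̄) ⊂ ∂̂_ε f(x̄) ∩ [−∂̂_ε φ(0)]. -/
noncomputable section
open Filter Topology

variable {X : Type*} [NormedAddCommGroup X] [NormedSpace ℝ X]

/-- ε-Fréchet subdifferential of g : X → EReal at x₀, as a set of continuous linear functionals. -/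
def eFrechetSub (ε : ℝ) (g : X → EReal) (x₀ : X) : Set (X →L[ℝ] ℝ) :=
  {p | (-(ε : EReal)) ≤ liminf (fun x =>
      (g x - g x₀ - ((p (x - x₀) : ℝ) : EReal)) * ((‖x - x₀‖⁻¹ : ℝ) : EReal)) (𝓝[≠] x₀)}

/-- s-Hölder subdifferential of g at x₀. -/
def holderSub (s : ℝ) (g : X → EReal) (x₀ : X) : Set (X →L[ℝ] ℝ) :=
  {p | (⊥ : EReal) < liminf (fun x =>
      (g x - g x₀ - ((p (x - x₀) : ℝ) : EReal)) * (((‖x - x₀‖ ^ (1 + s))⁻¹ : ℝ) : EReal)) (𝓝[≠] x₀)}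

/-- Infimal convolution T(x) = inf_y (φ(y - x) + f(y)). -/
def infConv (φ f : X → EReal) : X → EReal := fun x => ⨅ y, (φ (y - x) + f y)

/-- Minkowski gauge ρ_F(x) = inf {t ≥ 0 : x ∈ tF}, with inf ∅ = +∞. -/
def gauge' (F : Set X) : X → EReal := fun x =>
  sInf {r : EReal | ∃ t : ℝ, 0 ≤ t ∧ (∃ u ∈ F, x = t • u) ∧ r = (t : EReal)}

open Classical in
def eIndicator (Ω : Set X) : X → EReal := fun x => if x ∈ Ω then (0 : EReal) else ⊤

/-- Convexity for extended-real-valued functions. -/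
def ERealConvexOn (g : X → EReal) : Prop :=
  ∀ x y : X, ∀ t : ℝ, 0 ≤ t → t ≤ 1 →
    g (t • x + (1 - t) • y) ≤ ((t : ℝ) : EReal) * g x + (((1 - t : ℝ)) : EReal) * g y

/-! Both comparisons are pointwise and exact at the base point: `T ≤ f` with `T x₀ = f x₀`, and
`T (x₀ - u) ≤ φ u + f x₀` with equality at `u = 0`. Pointwise domination of difference quotients
passes to the liminf, so an ε-subgradient of `T` is one of `f` at `x₀` and, after the reflection
`x = x₀ - u`, its negative is one of `φ` at `0`. -/

section FrechetSubdifferential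

variable {ε : ℝ} {g h : X → EReal} {x₀ : X}

theorem eFrechetSub_subset_of_sub_le (hgh : ∀ x, g x - g x₀ ≤ h x - h x₀) :
    eFrechetSub ε g x₀ ⊆ eFrechetSub ε h x₀ := fun _ hp =>
  hp.trans <| liminf_le_liminf <| Eventually.of_forall fun x =>
    mul_le_mul_of_nonneg_right (EReal.sub_le_sub (hgh x) le_rfl)
      (EReal.coe_nonneg.2 (inv_nonneg.2 (norm_nonneg _)))

theorem mem_eFrechetSub_iff_neg_mem_comp_sub (p : X →L[ℝ] ℝ) :
    p ∈ eFrechetSub ε g x₀ ↔ -p ∈ eFrechetSub ε (fun u => g (x₀ - u)) 0 := by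
  have hmap : map (x₀ - ·) (𝓝[≠] (0 : X)) = 𝓝[≠] x₀ := by simp
  have hquot : ∀ u : X,
      (g (x₀ - u) - g (x₀ - 0) - (((-p) (u - 0) : ℝ) : EReal)) * ((‖u - 0‖⁻¹ : ℝ) : EReal) =
        (g (x₀ - u) - g x₀ - ((p (x₀ - u - x₀) : ℝ) : EReal)) *
          ((‖x₀ - u - x₀‖⁻¹ : ℝ) : EReal) := by
    intro u
    simp [sub_sub_cancel_left]
  simp only [eFrechetSub, Set.mem_ofPred_eq, hquot, ← hmap, ← liminf_comp, Function.comp_def]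

end FrechetSubdifferential

section InfConv

variable {φ f : X → EReal}

omit [NormedSpace ℝ X] in
theorem infConv_le_self (hφ0 : φ 0 = 0) (x : X) : infConv φ f x ≤ f x := by
  simpa [infConv, hφ0] using iInf_le (fun y => φ (y - x) + f y) x

omit [NormedSpace ℝ X] in
theorem infConv_sub_le (x u : X) : infConv φ f (x - u) ≤ φ u + f x := by
  simpa [infConv] using iInf_le (fun y => φ (y - (x - u)) + f y) x

end InfConv

theorem stmt3_general (φ f : X → EReal)
    (hφ0 : φ 0 = 0) (x₀ : X) (hS : infConv φ f x₀ = f x₀) :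
    ∀ ε : ℝ, 0 ≤ ε →
      eFrechetSub ε (infConv φ f) x₀ ⊆
        eFrechetSub ε f x₀ ∩ {p | -p ∈ eFrechetSub ε φ 0} := by
  intro ε _ p hp
  refine ⟨eFrechetSub_subset_of_sub_le (fun x => ?_) hp, ?_⟩
  · rw [hS]
    exact EReal.sub_le_sub (infConv_le_self hφ0 x) le_rfl
  · have hreflect := (mem_eFrechetSub_iff_neg_mem_comp_sub p).1 hp
    show -p ∈ eFrechetSub ε φ 0
    refine eFrechetSub_subset_of_sub_le (fun u => ?_) hreflect
    rw [sub_zero, hS, hφ0, sub_zero]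
    exact EReal.sub_le_of_le_add (infConv_sub_le x₀ u)

theorem stmt3 (φ f : X → EReal) (hφbot : ∀ x, φ x ≠ ⊥) (hfbot : ∀ x, f x ≠ ⊥)
    (hφ0 : φ 0 = 0) (x₀ : X) (hS : infConv φ f x₀ = f x₀) (hfin : f x₀ ≠ ⊤) :
    ∀ ε : ℝ, 0 ≤ ε →
      eFrechetSub ε (infConv φ f) x₀ ⊆
        eFrechetSub ε f x₀ ∩ {p | -p ∈ eFrechetSub ε φ 0} :=
  stmt3_general φ f hφ0 x₀ hS
end
end

section
/- Let X be a normed space, Ω a nonempty subset of X, J: X → (-∞,∞] satisfying |J(x) − J(x̄)| ≤ ℓ‖x − x̄‖ for all x ∈ Ω ∩ dom J with constant ℓ < 1, and define the perturbed distance function d_Ω^J(x) := inf{‖y − x‖ + J(y) : y ∈ Ω}. Suppose x̄ ∈ Ω with d_Ω^J(x̄) = J(x̄) finite. Then ∂̂d_Ω^J(x̄) = ∂̂(J + δ_Ω)(x̄) ∩ B*, where B* is the closed unit ball of X* and δ_Ω is the indicator function of Ω. -/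
/-!
If `f x₀ = c` is finite, `p` is a Fréchet subgradient of `f` at `x₀` iff for every `ε > 0` the
function `c + p (x - x₀) - ε ‖x - x₀‖` lies below `f` near `x₀`. Let `c = J x₀ = d_Ω^J x₀`.
Since `d_Ω^J ≤ J + δ_Ω` with equality at `x₀`, and `d_Ω^J x ≤ c + ‖x - x₀‖`, every subgradient
of `d_Ω^J` is one of `J + δ_Ω` of norm at most `1`.
Conversely, fix `x` near `x₀` and `y ∈ Ω`, and put `K = 2 / (1 - ℓ)`. If `‖y - x₀‖ ≤ K ‖x - x₀‖`,
the subgradient inequality of `J + δ_Ω` at `y` with `ε / K`, together with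
`p (y - x₀) ≥ p (x - x₀) - ‖y - x‖`, bounds `‖y - x‖ + J y` from below as required. If `y` is
farther away, the growth bound `J y ≥ c - ℓ ‖y - x₀‖` alone gives
`‖y - x‖ + J y ≥ c + (K (1 - ℓ) - 1) ‖x - x₀‖ = c + ‖x - x₀‖ ≥ c + p (x - x₀)`.
-/

noncomputable section
open Filter Topology

variable {X : Type*} [NormedAddCommGroup X] [NormedSpace ℝ X]

theorem EReal.coe_sub_le_of_abs_toReal_sub_le {a : EReal} {c r : ℝ} (ha : a ≠ ⊥)
    (h : a ≠ ⊤ → |a.toReal - c| ≤ r) : ((c - r : ℝ) : EReal) ≤ a := by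
  induction a using EReal.rec with
  | bot => exact absurd rfl ha
  | coe a =>
    have := (abs_le.mp (h (EReal.coe_ne_top a))).1
    rw [EReal.toReal_coe] at this
    exact EReal.coe_le_coe_iff.mpr (by linarith)
  | top => exact le_top

theorem EReal.neg_coe_le_sub_sub_mul_inv_iff (a : EReal) {b q ε t : ℝ} (ht : 0 < t) :
    -(ε : EReal) ≤ (a - b - q) * ((t⁻¹ : ℝ) : EReal) ↔ ((b + q - ε * t : ℝ) : EReal) ≤ a := by
  induction a using EReal.rec with
  | bot =>
    simp only [EReal.bot_sub, EReal.bot_mul_of_pos (EReal.coe_pos.mpr (inv_pos.mpr ht)), le_bot_iff,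
      EReal.neg_eq_bot_iff, EReal.coe_ne_top, EReal.coe_ne_bot]
  | coe a =>
    norm_cast
    rw [← div_eq_mul_inv, le_div_iff₀ ht]
    constructor <;> intro h <;> linarith
  | top => simp [EReal.top_mul_of_pos (EReal.coe_pos.mpr (inv_pos.mpr ht))]

theorem mem_eFrechetSub_zero_iff {f : X → EReal} {x₀ : X} {c : ℝ} (hc : f x₀ = c)
    {p : X →L[ℝ] ℝ} : p ∈ eFrechetSub 0 f x₀ ↔
      ∀ ε > 0, ∀ᶠ x in 𝓝 x₀, ((c + p (x - x₀) - ε * ‖x - x₀‖ : ℝ) : EReal) ≤ f x := by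
  simp only [eFrechetSub, Set.mem_ofPred_eq, EReal.coe_zero, neg_zero, hc]
  constructor
  · intro hp ε hε
    have hlt := lt_of_lt_of_le (EReal.coe_neg ε ▸ EReal.coe_lt_coe_iff.mpr (neg_lt_zero.mpr hε)) hp
    filter_upwards [eventually_nhdsWithin_iff.mp (eventually_lt_of_lt_liminf hlt)] with x hx
    rcases eq_or_ne x x₀ with rfl | hne
    · simp [hc]
    · exact (EReal.neg_coe_le_sub_sub_mul_inv_iff _ (norm_sub_pos_iff.mpr hne)).mp (hx hne).le
  · intro h
    refine le_of_forall_lt fun b hb => ?_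
    obtain ⟨ε', hbε, hε0⟩ := EReal.lt_iff_exists_real_btwn.mp hb
    refine lt_of_lt_of_le (b := -((-ε' : ℝ) : EReal)) (by simpa using hbε)
      (le_liminf_of_le (by isBoundedDefault) ?_)
    filter_upwards [eventually_nhdsWithin_of_eventually_nhds (h (-ε')
      (neg_pos.mpr (EReal.coe_lt_coe_iff.mp hε0))), self_mem_nhdsWithin] with x hx hne
    exact (EReal.neg_coe_le_sub_sub_mul_inv_iff _ (norm_sub_pos_iff.mpr hne)).mpr hx

theorem eFrechetSub_subset_of_le {f g : X → EReal} {x₀ : X} (hfg : ∀ x, f x ≤ g x)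
    (h₀ : f x₀ = g x₀) (ε : ℝ) : eFrechetSub ε f x₀ ⊆ eFrechetSub ε g x₀ := by
  intro p hp
  simp only [eFrechetSub, Set.mem_ofPred_eq] at hp ⊢
  refine le_trans hp (liminf_le_liminf (Eventually.of_forall fun x => ?_))
  rw [h₀]
  exact mul_le_mul_of_nonneg_right (EReal.sub_le_sub (EReal.sub_le_sub (hfg x) le_rfl) le_rfl)
      (EReal.coe_nonneg.mpr (inv_nonneg.mpr (norm_nonneg _)))

theorem ContinuousLinearMap.opNorm_le_of_eventually_apply_sub_le {p : X →L[ℝ] ℝ} {x₀ : X}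
    {K : ℝ} (hK : 0 ≤ K) (h : ∀ᶠ x in 𝓝 x₀, p (x - x₀) ≤ K * ‖x - x₀‖) : ‖p‖ ≤ K := by
  have hle : ∀ v, p v ≤ K * ‖v‖ := by
    intro v
    have hray : Tendsto (fun t : ℝ => x₀ + t • v) (𝓝[>] 0) (𝓝 x₀) :=
      ((continuous_const.add (continuous_id.smul continuous_const)).tendsto' 0 x₀
        (by simp)).mono_left nhdsWithin_le_nhds
    obtain ⟨t, hpt, ht⟩ := ((hray.eventually h).and self_mem_nhdsWithin).exists
    have ht : 0 < t := ht
    simp only [add_sub_cancel_left, map_smul, smul_eq_mul, norm_smul, Real.norm_of_nonneg ht.le]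
      at hpt
    nlinarith
  refine p.opNorm_le_bound hK fun v => abs_le.mpr ⟨?_, hle v⟩
  simpa [neg_le] using hle (-v)

theorem norm_le_of_mem_eFrechetSub_zero {f : X → EReal} {x₀ : X} {c L : ℝ} (hL : 0 ≤ L)
    (hc : f x₀ = c) (hf : ∀ᶠ x in 𝓝 x₀, f x ≤ ((c + L * ‖x - x₀‖ : ℝ) : EReal))
    {p : X →L[ℝ] ℝ} (hp : p ∈ eFrechetSub 0 f x₀) : ‖p‖ ≤ L := by
  refine le_of_forall_pos_le_add fun ε hε => ?_
  refine p.opNorm_le_of_eventually_apply_sub_le (x₀ := x₀) (by positivity) ?_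
  filter_upwards [(mem_eFrechetSub_zero_iff hc).mp hp ε hε, hf] with x hlow hup
  have := EReal.coe_le_coe_iff.mp (hlow.trans hup)
  linarith

def perturbedDist (Ω : Set X) (J : X → EReal) (x : X) : EReal :=
  ⨅ y : Ω, (((‖(y : X) - x‖ : ℝ) : EReal) + J y)

section perturbedDist

variable {Ω : Set X} {J : X → EReal}

omit [NormedSpace ℝ X]

theorem perturbedDist_le {x y : X} (hy : y ∈ Ω) :
    perturbedDist Ω J x ≤ ((‖y - x‖ : ℝ) : EReal) + J y :=
  iInf_le (fun y : Ω => ((‖(y : X) - x‖ : ℝ) : EReal) + J y) ⟨y, hy⟩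

theorem perturbedDist_le_add_eIndicator (hJ : ∀ x, J x ≠ ⊥) (x : X) :
    perturbedDist Ω J x ≤ J x + eIndicator Ω x := by
  by_cases hx : x ∈ Ω
  · simpa [eIndicator, hx] using perturbedDist_le (J := J) (x := x) hx
  · simp [eIndicator, hx, EReal.add_top_of_ne_bot (hJ x)]

theorem perturbedDist_le_add_norm_sub {x₀ : X} {c : ℝ} (hx₀ : x₀ ∈ Ω) (hc : J x₀ = c) (x : X) :
    perturbedDist Ω J x ≤ ((c + ‖x - x₀‖ : ℝ) : EReal) := by
  simpa [hc, norm_sub_rev, add_comm] using perturbedDist_le (J := J) (x := x) hx₀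

end perturbedDist

theorem le_norm_sub_add_of_near_bound {p : X →L[ℝ] ℝ} (hp : ‖p‖ ≤ 1) {x₀ x y : X} {a : EReal}
    {c ℓ K δ : ℝ} (hℓ : ℓ < 1) (hK : 2 ≤ K * (1 - ℓ)) (hδ : 0 ≤ δ)
    (hlow : ((c - ℓ * ‖y - x₀‖ : ℝ) : EReal) ≤ a)
    (hnear : ‖y - x₀‖ ≤ K * ‖x - x₀‖ → ((c + p (y - x₀) - δ * ‖y - x₀‖ : ℝ) : EReal) ≤ a) :
    ((c + p (x - x₀) - δ * K * ‖x - x₀‖ : ℝ) : EReal) ≤ ((‖y - x‖ : ℝ) : EReal) + a := by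
  induction a using EReal.rec with
  | bot => exact absurd hlow (not_le.mpr (EReal.bot_lt_coe _))
  | top => simp [EReal.add_top_of_ne_bot]
  | coe j =>
    rw [← EReal.coe_add, EReal.coe_le_coe_iff]
    rw [EReal.coe_le_coe_iff] at hlow
    have hp_le : ∀ v, |p v| ≤ ‖v‖ := fun v => by simpa using p.le_of_opNorm_le hp v
    have hpx := abs_le.mp (hp_le (x - x₀))
    have htri : ‖y - x₀‖ ≤ ‖y - x‖ + ‖x - x₀‖ := norm_sub_le_norm_sub_add_norm_sub _ _ _
    have hKpos : 0 < K := pos_of_mul_pos_left (by linarith : 0 < K * (1 - ℓ)) (by linarith)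
    rcases le_or_gt ‖y - x₀‖ (K * ‖x - x₀‖) with hy | hy
    · have hj := EReal.coe_le_coe_iff.mp (hnear hy)
      have hpy : p (y - x₀) = p (x - x₀) + p (y - x) := by rw [← map_add]; congr 1; abel
      have hpyx := abs_le.mp (hp_le (y - x))
      have hδy : δ * ‖y - x₀‖ ≤ δ * (K * ‖x - x₀‖) := by gcongr
      linarith
    · have : 2 * ‖x - x₀‖ < (1 - ℓ) * ‖y - x₀‖ := by
        calc 2 * ‖x - x₀‖ ≤ K * (1 - ℓ) * ‖x - x₀‖ := by gcongr
          _ = (1 - ℓ) * (K * ‖x - x₀‖) := by ring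
          _ < (1 - ℓ) * ‖y - x₀‖ := by gcongr
      have : 0 ≤ δ * K * ‖x - x₀‖ := by positivity
      linarith

theorem eventually_le_perturbedDist {Ω : Set X} {J : X → EReal} {x₀ : X} {c ℓ : ℝ} (hℓ : ℓ < 1)
    (hJ : ∀ y ∈ Ω, ((c - ℓ * ‖y - x₀‖ : ℝ) : EReal) ≤ J y) {p : X →L[ℝ] ℝ} (hp : ‖p‖ ≤ 1)
    (hpJ : ∀ ε > 0, ∀ᶠ y in 𝓝 x₀,
      ((c + p (y - x₀) - ε * ‖y - x₀‖ : ℝ) : EReal) ≤ J y + eIndicator Ω y)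
    {ε : ℝ} (hε : 0 < ε) :
    ∀ᶠ x in 𝓝 x₀, ((c + p (x - x₀) - ε * ‖x - x₀‖ : ℝ) : EReal) ≤ perturbedDist Ω J x := by
  have hℓ' : 0 < 1 - ℓ := sub_pos.mpr hℓ
  set K := 2 / (1 - ℓ)
  have hK : K * (1 - ℓ) = 2 := div_mul_cancel₀ _ hℓ'.ne'
  have hKpos : 0 < K := by positivity
  obtain ⟨r, hr, hnear⟩ := Metric.eventually_nhds_iff.mp (hpJ (ε / K) (by positivity))
  filter_upwards [Metric.ball_mem_nhds x₀ (div_pos hr hKpos)] with x hx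
  rw [Metric.mem_ball, dist_eq_norm, lt_div_iff₀ hKpos, mul_comm] at hx
  refine le_iInf fun ⟨y, hyΩ⟩ => ?_
  have key := le_norm_sub_add_of_near_bound (x := x) hp hℓ hK.ge (div_nonneg hε.le hKpos.le)
    (hJ y hyΩ) fun hy => by simpa [eIndicator, hyΩ] using @hnear y (by rw [dist_eq_norm]; linarith)
  rwa [div_mul_cancel₀ _ hKpos.ne'] at key

theorem stmt12_general (Ω : Set X) (J : X → EReal) (hJbot : ∀ x, J x ≠ ⊥)
    (x₀ : X) (hx₀ : x₀ ∈ Ω) (ℓ : ℝ) (hℓ : ℓ < 1)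
    (hlip : ∀ x ∈ Ω, J x ≠ ⊤ → |(J x).toReal - (J x₀).toReal| ≤ ℓ * ‖x - x₀‖)
    (hval : (⨅ y : Ω, (((‖(y : X) - x₀‖ : ℝ) : EReal) + J y)) = J x₀)
    (hfin : J x₀ ≠ ⊤) :
    eFrechetSub 0 (fun x => ⨅ y : Ω, (((‖(y : X) - x‖ : ℝ) : EReal) + J y)) x₀
      = eFrechetSub 0 (fun x => J x + eIndicator Ω x) x₀ ∩ {p | ‖p‖ ≤ 1} := by
  set c := (J x₀).toReal
  have hc : J x₀ = c := (EReal.coe_toReal hfin (hJbot x₀)).symm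
  have hd : perturbedDist Ω J x₀ = c := hval.trans hc
  have hg : J x₀ + eIndicator Ω x₀ = c := by simp [eIndicator, hx₀, hc]
  have hJ : ∀ y ∈ Ω, ((c - ℓ * ‖y - x₀‖ : ℝ) : EReal) ≤ J y := fun y hy =>
    EReal.coe_sub_le_of_abs_toReal_sub_le (hJbot y) (hlip y hy)
  ext p
  change p ∈ eFrechetSub 0 (perturbedDist Ω J) x₀ ↔ _
  constructor
  · intro hp
    refine ⟨eFrechetSub_subset_of_le (perturbedDist_le_add_eIndicator hJbot) (hd.trans hg.symm) 0 hp,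
      norm_le_of_mem_eFrechetSub_zero zero_le_one hd (Eventually.of_forall fun x => ?_) hp⟩
    rw [one_mul]
    exact perturbedDist_le_add_norm_sub hx₀ hc x
  · rintro ⟨hp, hpn⟩
    rw [mem_eFrechetSub_zero_iff hd]
    have hpJ := (mem_eFrechetSub_zero_iff (f := fun x => J x + eIndicator Ω x) hg).mp hp
    exact fun ε hε => eventually_le_perturbedDist hℓ hJ hpn hpJ hε

theorem stmt12 (Ω : Set X) (hΩ : Ω.Nonempty) (J : X → EReal) (hJbot : ∀ x, J x ≠ ⊥)
    (x₀ : X) (hx₀ : x₀ ∈ Ω) (ℓ : ℝ) (hℓ : ℓ < 1)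
    (hlip : ∀ x ∈ Ω, J x ≠ ⊤ → |(J x).toReal - (J x₀).toReal| ≤ ℓ * ‖x - x₀‖)
    (hval : (⨅ y : Ω, (((‖(y : X) - x₀‖ : ℝ) : EReal) + J y)) = J x₀)
    (hfin : J x₀ ≠ ⊤) :
    eFrechetSub 0 (fun x => ⨅ y : Ω, (((‖(y : X) - x‖ : ℝ) : EReal) + J y)) x₀
      = eFrechetSub 0 (fun x => J x + eIndicator Ω x) x₀ ∩ {p | ‖p‖ ≤ 1} :=
  stmt12_general Ω J hJbot x₀ hx₀ ℓ hℓ hlip hval hfin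
end
end

section
/- Let X be a normed space, φ: X → (-∞,∞] with φ(0) = 0 coercive with constant m > 0, and f: X → (-∞,∞] center-Lipschitz on dom f at x̄ with constant ℓ, 0 ≤ ℓ < m. Let T(x) = inf{φ(y−x)+f(y) : y ∈ X} and suppose x̄ ∈ dom T with T(x̄) = f(x̄). Then for every s > 0, ∂_s T(x̄) = ∂_s f(x̄) ∩ [−∂_s φ(0)]. -/
/-!
Since `φ 0 = 0`, the infimal convolution `T` lies below `f` and touches it at `x₀`, which gives
`∂ₛT(x₀) ⊆ ∂ₛf(x₀)`; and `T (x₀ - u) ≤ φ u + f x₀` turns a Hölder minorant of `T` at `x₀` with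
slope `p` into one of `φ` at `0` with slope `-p`.

Conversely, to bound `φ (y - x) + f y` from below for `x` near `x₀`, pick `K` with
`(m - ℓ) K ≥ ℓ + ‖p‖`. If `‖y - x‖ ≤ K ‖x - x₀‖`, both `y - x` and `y - x₀` are of order
`‖x - x₀‖`, and the Hölder minorants of `φ` at `0` and of `f` at `x₀` add up, the linear terms
`-p (y - x) + p (y - x₀)` combining to `p (x - x₀)`. Otherwise coercivity and the center-Lipschitz
bound give `φ (y - x) + f y ≥ f x₀ + ‖p‖ ‖x - x₀‖`.
-/

noncomputable section
open Filter Topology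

variable {X : Type*} [NormedAddCommGroup X] [NormedSpace ℝ X]

lemma EReal.bot_lt_liminf_iff {α : Type*} {F : Filter α} {g : α → EReal} :
    ⊥ < liminf g F ↔ ∃ c : ℝ, ∀ᶠ x in F, (c : EReal) ≤ g x := by
  refine ⟨fun h => ?_, fun ⟨c, hc⟩ =>
    (EReal.bot_lt_coe c).trans_le (le_liminf_of_le (by isBoundedDefault) hc)⟩
  obtain ⟨c, -, hc⟩ := EReal.lt_iff_exists_real_btwn.mp h
  exact ⟨c, (eventually_lt_of_lt_liminf hc).mono fun _ => le_of_lt⟩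

lemma EReal.coe_le_mul_coe_inv_iff {A : EReal} {h c : ℝ} (hh : 0 < h) :
    (c : EReal) ≤ A * ((h⁻¹ : ℝ) : EReal) ↔ ((c * h : ℝ) : EReal) ≤ A := by
  rw [EReal.coe_inv, show A * (h : EReal)⁻¹ = A / (h : EReal) from rfl,
    EReal.le_div_iff_mul_le (by exact_mod_cast hh) (EReal.coe_ne_top h), ← EReal.coe_mul]

lemma EReal.coe_le_sub_coe_sub_coe_iff {A : EReal} {a b c : ℝ} :
    (c : EReal) ≤ A - a - b ↔ ((c + b + a : ℝ) : EReal) ≤ A := by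
  rw [EReal.le_sub_iff_add_le (.inl (EReal.coe_ne_bot b)) (.inl (EReal.coe_ne_top b)),
    ← EReal.coe_add,
    EReal.le_sub_iff_add_le (.inl (EReal.coe_ne_bot a)) (.inl (EReal.coe_ne_top a)),
    ← EReal.coe_add]

lemma holderSub_mono {s : ℝ} {g h : X → EReal} {x₀ : X} (hle : g ≤ h) (heq : g x₀ = h x₀) :
    holderSub s g x₀ ⊆ holderSub s h x₀ := by
  intro p hp
  simp only [holderSub, Set.mem_ofPred_eq] at hp ⊢
  refine hp.trans_le (liminf_le_liminf (Eventually.of_forall fun x => ?_))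
  rw [heq]
  exact mul_le_mul_of_nonneg_right (EReal.sub_le_sub (EReal.sub_le_sub (hle x) le_rfl) le_rfl)
    (EReal.coe_nonneg.mpr (inv_nonneg.mpr (Real.rpow_nonneg (norm_nonneg _) _)))

lemma mem_holderSub_iff {s : ℝ} {g : X → EReal} {x₀ : X} {p : X →L[ℝ] ℝ} {r : ℝ}
    (hg : g x₀ = r) :
    p ∈ holderSub s g x₀ ↔ ∃ c ≤ (0 : ℝ), ∃ δ > (0 : ℝ), ∀ x : X, ‖x - x₀‖ < δ →
      ((r + p (x - x₀) + c * ‖x - x₀‖ ^ (1 + s) : ℝ) : EReal) ≤ g x := by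
  have key : ∀ c : ℝ, ∀ x ≠ x₀,
      (c : EReal) ≤ (g x - g x₀ - ((p (x - x₀) : ℝ) : EReal)) *
        (((‖x - x₀‖ ^ (1 + s))⁻¹ : ℝ) : EReal) ↔
      ((r + p (x - x₀) + c * ‖x - x₀‖ ^ (1 + s) : ℝ) : EReal) ≤ g x := fun c x hx => by
    rw [hg, EReal.coe_le_mul_coe_inv_iff (Real.rpow_pos_of_pos (norm_sub_pos_iff.mpr hx) _),
      EReal.coe_le_sub_coe_sub_coe_iff]
    ring_nf
  simp only [holderSub, Set.mem_ofPred_eq, EReal.bot_lt_liminf_iff, eventually_nhdsWithin_iff,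
    Metric.eventually_nhds_iff, dist_eq_norm, Set.mem_compl_singleton_iff]
  constructor
  · rintro ⟨c, δ, hδ, hc⟩
    refine ⟨min c 0, min_le_right _ _, δ, hδ, fun x hx => ?_⟩
    rcases eq_or_ne x x₀ with rfl | hne
    · rw [hg, sub_self, map_zero, norm_zero, add_zero, EReal.coe_le_coe_iff]
      exact add_le_of_nonpos_right
        (mul_nonpos_of_nonpos_of_nonneg (min_le_right _ _) (Real.rpow_nonneg le_rfl _))
    · refine le_trans (EReal.coe_le_coe_iff.mpr ?_) ((key c x hne).mp (hc hx hne))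
      gcongr
      exact min_le_left _ _
  · rintro ⟨c, -, δ, hδ, hc⟩
    exact ⟨c, δ, hδ, fun x hx hne => (key c x hne).mpr (hc x hx)⟩

lemma infConv_le {E : Type*} [NormedAddCommGroup E] (φ f : E → EReal) (x y : E) :
    infConv φ f x ≤ φ (y - x) + f y :=
  iInf_le (fun y => φ (y - x) + f y) y

lemma infConv_le_self_s16 {E : Type*} [NormedAddCommGroup E] {φ : E → EReal} (hφ0 : φ 0 = 0)
    (f : E → EReal) : infConv φ f ≤ f :=
  fun x => by simpa [hφ0] using infConv_le φ f x x

lemma neg_mem_holderSub_zero_of_mem_holderSub_infConv {s : ℝ} {φ f : X → EReal} {x₀ : X}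
    {p : X →L[ℝ] ℝ} {r : ℝ} (hφ0 : φ 0 = 0) (hf : f x₀ = r) (hT : infConv φ f x₀ = r)
    (hp : p ∈ holderSub s (infConv φ f) x₀) : -p ∈ holderSub s φ 0 := by
  obtain ⟨c, hc, δ, hδ, hminor⟩ := (mem_holderSub_iff hT).mp hp
  refine (mem_holderSub_iff (r := 0) hφ0).mpr ⟨c, hc, δ, hδ, fun u hu => ?_⟩
  rw [sub_zero] at hu ⊢
  have hbound := (hminor (x₀ - u) (by simpa using hu)).trans (infConv_le φ f (x₀ - u) x₀)
  rw [sub_sub_cancel, hf, sub_sub_cancel_left, norm_neg] at hbound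
  have hφu := EReal.sub_le_of_le_add hbound
  rw [← EReal.coe_sub] at hφu
  refine le_trans (le_of_eq ?_) hφu
  simp only [neg_apply, map_neg]
  ring_nf

lemma mul_rpow_mul_rpow_le_of_nonpos {c a K t q : ℝ} (hc : c ≤ 0) (ha : 0 ≤ a) (hK : 0 ≤ K)
    (ht : 0 ≤ t) (haKt : a ≤ K * t) (hq : 0 ≤ q) : c * K ^ q * t ^ q ≤ c * a ^ q := by
  rw [mul_assoc, ← Real.mul_rpow hK ht]
  exact mul_le_mul_of_nonpos_left (Real.rpow_le_rpow ha haKt hq) hc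

lemma coe_add_le_of_holder_minorants {φ f : X → EReal} {s r c₁ c₂ K : ℝ} {x₀ x y : X}
    {p : X →L[ℝ] ℝ} (hs : 0 ≤ 1 + s) (hc₁ : c₁ ≤ 0) (hc₂ : c₂ ≤ 0) (hK : 0 ≤ K)
    (hφ : ((-p (y - x) + c₂ * ‖y - x‖ ^ (1 + s) : ℝ) : EReal) ≤ φ (y - x))
    (hf : ((r + p (y - x₀) + c₁ * ‖y - x₀‖ ^ (1 + s) : ℝ) : EReal) ≤ f y)
    (hnear : ‖y - x‖ ≤ K * ‖x - x₀‖) (hnear₀ : ‖y - x₀‖ ≤ (K + 1) * ‖x - x₀‖) :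
    ((r + p (x - x₀) + (c₂ * K ^ (1 + s) + c₁ * (K + 1) ^ (1 + s)) * ‖x - x₀‖ ^ (1 + s) : ℝ) :
      EReal) ≤ φ (y - x) + f y := by
  refine le_trans ?_ (add_le_add hφ hf)
  rw [← EReal.coe_add, EReal.coe_le_coe_iff]
  have := mul_rpow_mul_rpow_le_of_nonpos hc₂ (norm_nonneg _) hK (norm_nonneg _) hnear hs
  have := mul_rpow_mul_rpow_le_of_nonpos hc₁ (norm_nonneg _) (by linarith) (norm_nonneg _) hnear₀ hs
  have hpy : p (y - x₀) = p (y - x) + p (x - x₀) := by rw [← map_add, sub_add_sub_cancel]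
  rw [hpy]
  linarith

lemma coe_add_le_of_coercive_of_lipschitz {φ f : X → EReal} {m ℓ r b : ℝ} {x₀ x y : X}
    {p : X →L[ℝ] ℝ} (hcoer : ∀ u : X, ((m * ‖u‖ : ℝ) : EReal) ≤ φ u) (hℓ0 : 0 ≤ ℓ)
    (hfy : f y = b) (hlip : |b - r| ≤ ℓ * ‖y - x₀‖)
    (hfar : (ℓ + ‖p‖) * ‖x - x₀‖ ≤ (m - ℓ) * ‖y - x‖) :
    ((r + p (x - x₀) : ℝ) : EReal) ≤ φ (y - x) + f y := by
  have hp : p (x - x₀) ≤ ‖p‖ * ‖x - x₀‖ := (le_abs_self _).trans (p.le_opNorm _)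
  have hb : r - ℓ * ‖y - x₀‖ ≤ b := by linarith [(abs_le.mp hlip).1]
  have htri : ℓ * ‖y - x₀‖ ≤ ℓ * (‖y - x‖ + ‖x - x₀‖) :=
    mul_le_mul_of_nonneg_left (norm_sub_le_norm_sub_add_norm_sub y x x₀) hℓ0
  calc ((r + p (x - x₀) : ℝ) : EReal) ≤ ((m * ‖y - x‖ + b : ℝ) : EReal) := by
        exact_mod_cast (by linarith)
    _ ≤ φ (y - x) + f y := by rw [EReal.coe_add, hfy]; exact add_le_add_left (hcoer _) _

lemma mem_holderSub_infConv {s m ℓ r : ℝ} {φ f : X → EReal} {x₀ : X} {p : X →L[ℝ] ℝ}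
    (hs : 0 ≤ 1 + s) (hφbot : ∀ x, φ x ≠ ⊥) (hfbot : ∀ x, f x ≠ ⊥) (hφ0 : φ 0 = 0)
    (hcoer : ∀ u : X, ((m * ‖u‖ : ℝ) : EReal) ≤ φ u) (hℓ0 : 0 ≤ ℓ) (hℓm : ℓ < m)
    (hlip : ∀ x : X, f x ≠ ⊤ → |(f x).toReal - r| ≤ ℓ * ‖x - x₀‖)
    (hf : f x₀ = r) (hT : infConv φ f x₀ = r)
    (hpf : p ∈ holderSub s f x₀) (hpφ : -p ∈ holderSub s φ 0) :
    p ∈ holderSub s (infConv φ f) x₀ := by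
  obtain ⟨c₁, hc₁, δ₁, hδ₁, hbf⟩ := (mem_holderSub_iff hf).mp hpf
  obtain ⟨c₂, hc₂, δ₂, hδ₂, hbφ⟩ := (mem_holderSub_iff (r := 0) hφ0).mp hpφ
  obtain ⟨K, hK, hKm⟩ : ∃ K > 0, ℓ + ‖p‖ ≤ (m - ℓ) * K := by
    have hmℓ := sub_pos.mpr hℓm
    refine ⟨(ℓ + ‖p‖) / (m - ℓ) + 1, by positivity, ?_⟩
    rw [mul_add, mul_div_cancel₀ _ hmℓ.ne']
    linarith
  set C := c₂ * K ^ (1 + s) + c₁ * (K + 1) ^ (1 + s)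
  have hC : C ≤ 0 := add_nonpos (mul_nonpos_of_nonpos_of_nonneg hc₂ (by positivity))
    (mul_nonpos_of_nonpos_of_nonneg hc₁ (by positivity))
  refine (mem_holderSub_iff hT).mpr ⟨C, hC, min (δ₁ / (K + 1)) (δ₂ / K), by positivity,
    fun x hx => le_iInf fun y => ?_⟩
  set t := ‖x - x₀‖
  have ht : 0 ≤ t := norm_nonneg _
  rw [lt_min_iff, lt_div_iff₀ (by positivity), lt_div_iff₀ hK] at hx
  rcases le_or_gt ‖y - x‖ (K * t) with hnear | hfar
  · have hyx₀ : ‖y - x₀‖ ≤ (K + 1) * t := by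
      linarith [norm_sub_le_norm_sub_add_norm_sub y x x₀]
    have hφy := hbφ (y - x) (by rw [sub_zero]; linarith)
    have hfy := hbf y (by linarith)
    rw [sub_zero, zero_add, neg_apply] at hφy
    exact coe_add_le_of_holder_minorants hs hc₁ hc₂ hK.le hφy hfy hnear hyx₀
  · by_cases hfy : f y = ⊤
    · rw [hfy, EReal.add_top_of_ne_bot (hφbot _)]
      exact le_top
    have hfar' : (ℓ + ‖p‖) * t ≤ (m - ℓ) * ‖y - x‖ :=
      calc (ℓ + ‖p‖) * t ≤ (m - ℓ) * K * t := mul_le_mul_of_nonneg_right hKm ht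
        _ ≤ (m - ℓ) * ‖y - x‖ := by
          rw [mul_assoc]; exact mul_le_mul_of_nonneg_left hfar.le (sub_pos.mpr hℓm).le
    refine le_trans ?_ (coe_add_le_of_coercive_of_lipschitz hcoer hℓ0
      (EReal.coe_toReal hfy (hfbot y)).symm (hlip y hfy) hfar')
    exact EReal.coe_le_coe_iff.mpr
      (add_le_of_nonpos_right (mul_nonpos_of_nonpos_of_nonneg hC (Real.rpow_nonneg ht _)))

theorem stmt16_general (φ f : X → EReal) (hφbot : ∀ x, φ x ≠ ⊥) (hfbot : ∀ x, f x ≠ ⊥)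
    (hφ0 : φ 0 = 0) (m : ℝ)
    (hcoer : ∀ x : X, ((m * ‖x‖ : ℝ) : EReal) ≤ φ x)
    (x₀ : X) (ℓ : ℝ) (hℓ0 : 0 ≤ ℓ) (hℓm : ℓ < m)
    (hlip : ∀ x : X, f x ≠ ⊤ → |(f x).toReal - (f x₀).toReal| ≤ ℓ * ‖x - x₀‖)
    (hdom : infConv φ f x₀ ≠ ⊤) (hS : infConv φ f x₀ = f x₀) :
    ∀ s : ℝ, 0 < s →
      holderSub s (infConv φ f) x₀
        = holderSub s f x₀ ∩ {p | -p ∈ holderSub s φ 0} := by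
  intro s hs
  obtain ⟨r, hf⟩ : ∃ r : ℝ, f x₀ = r := ⟨_, (EReal.coe_toReal (hS ▸ hdom) (hfbot x₀)).symm⟩
  have hT : infConv φ f x₀ = r := hS.trans hf
  rw [hf, EReal.toReal_coe] at hlip
  ext p
  rw [Set.mem_inter_iff, Set.mem_ofPred_eq]
  constructor
  · intro hp
    exact ⟨holderSub_mono (infConv_le_self_s16 hφ0 f) hS hp,
      neg_mem_holderSub_zero_of_mem_holderSub_infConv hφ0 hf hT hp⟩
  · rintro ⟨hpf, hpφ⟩
    exact mem_holderSub_infConv (by linarith) hφbot hfbot hφ0 hcoer hℓ0 hℓm hlip hf hT hpf hpφ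

theorem stmt16 (φ f : X → EReal) (hφbot : ∀ x, φ x ≠ ⊥) (hfbot : ∀ x, f x ≠ ⊥)
    (hφ0 : φ 0 = 0) (m : ℝ) (hm : 0 < m)
    (hcoer : ∀ x : X, ((m * ‖x‖ : ℝ) : EReal) ≤ φ x)
    (x₀ : X) (ℓ : ℝ) (hℓ0 : 0 ≤ ℓ) (hℓm : ℓ < m)
    (hlip : ∀ x : X, f x ≠ ⊤ → |(f x).toReal - (f x₀).toReal| ≤ ℓ * ‖x - x₀‖)
    (hdom : infConv φ f x₀ ≠ ⊤) (hS : infConv φ f x₀ = f x₀) :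
    ∀ s : ℝ, 0 < s →
      holderSub s (infConv φ f) x₀
        = holderSub s f x₀ ∩ {p | -p ∈ holderSub s φ 0} :=
  stmt16_general φ f hφbot hfbot hφ0 m hcoer x₀ ℓ hℓ0 hℓm hlip hdom hS
end
end
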